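/- Every connecting transition set of a tree G with at least 2 vertices has size at least |V(G)| − 2. Consequently, the minimum size of a connecting transition set of a tree with n ≥ 2 vertices is exactly n − 2. -/

import Mathlib

/-!
For a vertex `b`, let `L_b` be the graph on the neighbours of `b` whose edges are the pairs
`{x, y}` with `xby ∈ T`. In a tree, a `T`-compatible walk between two neighbours `c`, `d` of `b`
stays in one branch at `b` between consecutive visits of `b`, so it returns to `b` through the
neighbour by which it left; each pass through `b` is a backtrack or an edge of `L_b`. Hence
`L_b` is connected, has at least `deg b - 1` edges, and the transitions centred at different
vertices are distinct, giving `|T| ≥ ∑ (deg b - 1) = n - 2`. Conversely, fixing a neighbour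
`f b` of every `b` and taking the transitions `f(b) b y` gives `n - 2` transitions, and any walk
becomes `T`-compatible once every inner vertex `w` is followed by the detour `w → f w → w`.
-/

variable {V : Type*}

/-- The transition consisting of the edges `ab` and `bc`, written `abc`. -/
def transitionOf (a b c : V) : Sym2 (Sym2 V) := s(s(a, b), s(b, c))

/-- `t` is a transition of `G`: an unordered pair of two distinct adjacent edges. -/
def SimpleGraph.IsTransition (G : SimpleGraph V) (t : Sym2 (Sym2 V)) : Prop :=
  ∃ a b c, G.Adj a b ∧ G.Adj b c ∧ a ≠ c ∧ t = transitionOf a b c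

/-- A list of vertices (the support of a walk) is `T`-compatible: every pair of
consecutive edges is either a transition of `T` or a backtrack. -/
def TCompatible (T : Set (Sym2 (Sym2 V))) (l : List V) : Prop :=
  ∀ (i : ℕ) (h : i + 2 < l.length),
    l[i]'(by omega) = l[i + 2]'h ∨
    transitionOf (l[i]'(by omega)) (l[i + 1]'(by omega)) (l[i + 2]'h) ∈ T

/-- `G` is `T`-connected: every two vertices are joined by a `T`-compatible walk. -/
def SimpleGraph.TConnected (G : SimpleGraph V) (T : Set (Sym2 (Sym2 V))) : Prop :=
  ∀ u v : V, ∃ p : G.Walk u v, TCompatible T p.support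

/-- `T` is a connecting transition set of `G`. -/
def SimpleGraph.ConnectingTransitionSet (G : SimpleGraph V)
    (T : Finset (Sym2 (Sym2 V))) : Prop :=
  (∀ t ∈ T, G.IsTransition t) ∧ G.TConnected ↑T

/-- `H` is a connecting hypergraph of `G`: every hyperedge has at least two vertices and
induces a connected subgraph, and every pair of distinct non-adjacent vertices is
contained in a common hyperedge. -/
def SimpleGraph.ConnectingHypergraph (G : SimpleGraph V) (H : Finset (Finset V)) : Prop :=
  (∀ E ∈ H, 2 ≤ E.card ∧ (G.induce (E : Set V)).Connected) ∧
  ∀ u v : V, u ≠ v → ¬G.Adj u v → ∃ E ∈ H, u ∈ E ∧ v ∈ E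

/-- The cost of a hypergraph: the sum over hyperedges of (size − 2). -/
def hcost (H : Finset (Finset V)) : ℕ := ∑ E ∈ H, (E.card - 2)

/-- The quantity τ(G): the sum over co-connected components `C` of `G` with `|C| ≥ 2`
of `|C| − 2` if `G[C]` is connected and `|C| − 1` otherwise. -/
noncomputable def tau {V : Type*} [Fintype V] (G : SimpleGraph V) : ℕ := by
  classical
  haveI : Fintype Gᶜ.ConnectedComponent := Fintype.ofFinite _
  exact ∑ C : Gᶜ.ConnectedComponent,
    if 2 ≤ C.supp.ncard then
      (if (G.induce C.supp).Connected then C.supp.ncard - 2 else C.supp.ncard - 1)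
    else 0

open SimpleGraph

theorem transitionOf_comm (a b c : V) : transitionOf a b c = transitionOf c b a := by
  simp [transitionOf, Sym2.eq_swap]

theorem transitionOf_eq_transitionOf {a b c a' b' c' : V} (hac : a ≠ c)
    (h : transitionOf a b c = transitionOf a' b' c') : b = b' ∧ s(a, c) = s(a', c') := by
  simp only [transitionOf, Sym2.eq_iff] at h ⊢
  grind

section TCompatible

variable {T : Set (Sym2 (Sym2 V))} {x y z : V} {l : List V}

theorem tCompatible_of_length_le_two (h : l.length ≤ 2) : TCompatible T l :=
  fun _ hi => absurd hi (by omega)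

theorem TCompatible.of_cons (h : TCompatible T (x :: l)) : TCompatible T l :=
  fun i hi => h (i + 1) (by simp; omega)

theorem tCompatible_cons_cons_cons :
    TCompatible T (x :: y :: z :: l) ↔
      (x = z ∨ transitionOf x y z ∈ T) ∧ TCompatible T (y :: z :: l) := by
  refine ⟨fun h => ⟨h 0 (by simp), h.of_cons⟩, ?_⟩
  rintro ⟨h0, h⟩ (_ | i) hi
  · exact h0
  · exact h i (by simpa using hi)

end TCompatible

def localGraph (b : V) (T : Set (Sym2 (Sym2 V))) : SimpleGraph V where
  Adj x y := x ≠ y ∧ transitionOf x b y ∈ T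
  symm := ⟨fun x y h => ⟨h.1.symm, transitionOf_comm x b y ▸ h.2⟩⟩
  loopless := ⟨fun _ h => h.1 rfl⟩

theorem sum_card_edgeSet_localGraph_le [Fintype V] (T : Finset (Sym2 (Sym2 V))) :
    ∑ b : V, Nat.card (localGraph b ↑T).edgeSet ≤ T.card := by
  let centredAt (b : V) : Sym2 V → Sym2 (Sym2 V) :=
    Sym2.lift ⟨fun x y => transitionOf x b y, fun x y => transitionOf_comm x b y⟩
  have hmem (b : V) (e : Sym2 V) (he : e ∈ (localGraph b ↑T).edgeSet) : centredAt b e ∈ T := by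
    induction e using Sym2.ind with
    | _ x y => exact he.2
  let φ : (Σ b, (localGraph b ↑T).edgeSet) → T := fun e => ⟨centredAt e.1 e.2, hmem _ _ e.2.2⟩
  have hφ : Function.Injective φ := by
    rintro ⟨b, e, he⟩ ⟨b', e', he'⟩ h
    induction e using Sym2.ind
    induction e' using Sym2.ind
    obtain ⟨rfl, hs⟩ := transitionOf_eq_transitionOf he.1 (congrArg Subtype.val h)
    exact Sigma.subtype_ext rfl hs
  simpa [Nat.card_sigma] using Nat.card_le_card_of_injective φ hφ

theorem card_le_card_edgeSet_add_one_of_reachable [Finite V] {H : SimpleGraph V} {s : Finset V}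
    (hs : ∀ x ∈ s, ∀ y ∈ s, H.Reachable x y) : s.card ≤ Nat.card H.edgeSet + 1 := by
  rcases s.eq_empty_or_nonempty with rfl | ⟨x, hx⟩
  · simp
  set C := H.connectedComponentMk x
  have hsC : (s : Set V) ⊆ C.supp := fun y hy => ConnectedComponent.sound (hs y hy x hx)
  calc s.card = (s : Set V).ncard := (Set.ncard_coe_finset s).symm
    _ ≤ Nat.card C.supp := Set.ncard_le_ncard hsC
    _ ≤ Nat.card C.toSimpleGraph.edgeSet + 1 :=
        C.connected_toSimpleGraph.card_vert_le_card_edgeSet_add_one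
    _ ≤ Nat.card H.edgeSet + 1 := by
        gcongr
        exact Nat.card_le_card_of_injective _
          (Hom.mapEdgeSet.injective C.toSimpleGraph_hom Subtype.val_injective)

theorem SimpleGraph.IsAcyclic.eq_of_walk_notMem_support {G : SimpleGraph V} (hG : G.IsAcyclic)
    {b x y : V} (hx : G.Adj b x) (hy : G.Adj b y) (w : G.Walk x y) (hw : b ∉ w.support) :
    x = y := by
  have hbridge :=
    isBridge_iff_forall_walk_mem_edges.mp (isAcyclic_iff_forall_adj_isBridge.mp hG hy) (.cons hx w)
  rcases List.mem_cons.mp (Walk.edges_cons _ _ ▸ hbridge) with h | h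
  · exact (Sym2.congr_right.mp h).symm
  · exact absurd (w.fst_mem_support_of_mem_edges h) hw

theorem SimpleGraph.IsTree.sum_degree_sub_one [Fintype V] {G : SimpleGraph V}
    [DecidableRel G.Adj] (hG : G.IsTree) (h2 : 2 ≤ Fintype.card V) :
    ∑ b, (G.degree b - 1) = Fintype.card V - 2 := by
  have : Nontrivial V := Fintype.one_lt_card_iff_nontrivial.mp h2
  have hsum : ∑ b, G.degree b = 2 * (Fintype.card V - 1) := by
    rw [sum_degrees_eq_twice_card_edges, ← hG.card_edgeFinset, Nat.add_sub_cancel]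
  rw [Finset.sum_tsub_distrib _ fun b _ => hG.connected.preconnected.degree_pos_of_nontrivial b,
    hsum, Finset.sum_const, Finset.card_univ, smul_eq_mul, mul_one]
  omega

section Branch

variable {G : SimpleGraph V} {T : Set (Sym2 (Sym2 V))} {b c : V}

/-- In a tree, a vertex `v ≠ b` lies in the branch at `b` of exactly one neighbour `e` of `b`;
this says that `e` is reachable from `c` in the local graph at `b`. -/
def BranchReachable (G : SimpleGraph V) (T : Set (Sym2 (Sym2 V))) (b c v : V) : Prop :=
  ∃ e, G.Adj b e ∧ (localGraph b T).Reachable c e ∧ ∃ w : G.Walk e v, b ∉ w.support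

theorem branchReachable_of_reachable {z : V} (hz : G.Adj b z)
    (h : (localGraph b T).Reachable c z) : BranchReachable G T b c z :=
  ⟨z, hz, h, .nil, by simpa using hz.ne⟩

theorem BranchReachable.of_adj {y z : V} (h : BranchReachable G T b c y) (hyz : G.Adj y z)
    (hz : z ≠ b) : BranchReachable G T b c z := by
  obtain ⟨e, he, hce, w, hw⟩ := h
  refine ⟨e, he, hce, w.concat hyz, ?_⟩
  simp [Walk.support_concat, hw, hz.symm]

theorem BranchReachable.reachable (hG : G.IsAcyclic) {x : V} (h : BranchReachable G T b c x)
    (hx : G.Adj b x) : (localGraph b T).Reachable c x := by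
  obtain ⟨e, he, hce, w, hw⟩ := h
  exact hG.eq_of_walk_notMem_support he hx w hw ▸ hce

/-- `x` is the vertex preceding `y` on the walk; while the walk sits at `b`, the invariant is
carried by `x`. -/
theorem branchReachable_of_tCompatible (hG : G.IsAcyclic) :
    ∀ {x y v : V} (p : G.Walk y v), G.Adj x y → TCompatible T (x :: p.support) →
      (y = b → BranchReachable G T b c x) → (y ≠ b → BranchReachable G T b c y) →
      v ≠ b → BranchReachable G T b c v
  | _, _, _, .nil, _, _, _, hy, hv => hy hv
  | x, y, _, .cons (v := z) hyz q, hxy, hp, hxb, hyb, hv => by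
    rw [Walk.support_cons, ← q.cons_tail_support, tCompatible_cons_cons_cons,
      q.cons_tail_support] at hp
    by_cases hy : y = b
    · refine branchReachable_of_tCompatible hG q hyz hp.2
        (fun hz => absurd (hz.trans hy.symm) hyz.ne') (fun _ => ?_) hv
      have hcx := (hxb hy).reachable hG (hy ▸ hxy.symm)
      rw [hy] at hyz hp
      refine branchReachable_of_reachable hyz ?_
      rcases hp.1 with rfl | hxz
      · exact hcx
      · by_cases hxz' : x = z
        · exact hxz' ▸ hcx
        · exact hcx.trans (Adj.reachable ⟨hxz', hxz⟩)
    · exact branchReachable_of_tCompatible hG q hyz hp.2 (fun _ => hyb hy) ((hyb hy).of_adj hyz) hv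

theorem localGraph_reachable_of_tConnected (hG : G.IsAcyclic) (hT : G.TConnected T) {d : V}
    (hc : G.Adj b c) (hd : G.Adj b d) : (localGraph b T).Reachable c d := by
  obtain ⟨p, hp⟩ := hT c d
  cases p with
  | nil => rfl
  | cons hcy q =>
    have hc' : BranchReachable G T b c c := branchReachable_of_reachable hc .rfl
    exact (branchReachable_of_tCompatible hG q hcy hp (fun _ => hc') (hc'.of_adj hcy)
      hd.ne').reachable hG hd

end Branch

theorem SimpleGraph.IsTree.card_sub_two_le_card_of_tConnected [Fintype V] {G : SimpleGraph V}
    (hG : G.IsTree) (h2 : 2 ≤ Fintype.card V) {T : Finset (Sym2 (Sym2 V))}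
    (hT : G.TConnected ↑T) : Fintype.card V - 2 ≤ T.card := by
  classical
  calc Fintype.card V - 2 = ∑ b, (G.degree b - 1) := (hG.sum_degree_sub_one h2).symm
    _ ≤ ∑ b, Nat.card (localGraph b ↑T).edgeSet := Finset.sum_le_sum fun b _ => by
        have := card_le_card_edgeSet_add_one_of_reachable (s := G.neighborFinset b)
          fun c hc d hd => localGraph_reachable_of_tConnected hG.isAcyclic hT
            ((mem_neighborFinset _ _ _).mp hc) ((mem_neighborFinset _ _ _).mp hd)
        rw [card_neighborFinset_eq_degree] at this
        omega
    _ ≤ T.card := sum_card_edgeSet_localGraph_le T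

section Detour

variable {G : SimpleGraph V} {T : Set (Sym2 (Sym2 V))} {f : V → V}

/-- `f u` serves as a virtual predecessor of `u`; every inner vertex `w` of the walk gets the
detour `w → f w → w`. -/
theorem exists_walk_tCompatible_cons (hf : ∀ x, G.Adj x (f x))
    (hT : ∀ x y, G.Adj x y → y ≠ f x → transitionOf (f x) x y ∈ T) :
    ∀ {u v : V}, G.Walk u v → ∃ q : G.Walk u v, TCompatible T (f u :: q.support)
  | _, _, .nil => ⟨.nil, tCompatible_of_length_le_two (by simp)⟩
  | u, _, .cons (v := w) huw p => by
    obtain ⟨q, hq⟩ := exists_walk_tCompatible_cons hf hT p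
    refine ⟨.cons huw (.cons (hf w) (.cons (hf w).symm q)), ?_⟩
    rw [← q.cons_tail_support] at hq
    rw [Walk.support_cons, Walk.support_cons, Walk.support_cons, ← q.cons_tail_support]
    refine tCompatible_cons_cons_cons.2 ⟨?_, tCompatible_cons_cons_cons.2
      ⟨?_, tCompatible_cons_cons_cons.2 ⟨.inl rfl, hq⟩⟩⟩
    · exact or_iff_not_imp_left.2 fun h => hT u w huw (Ne.symm h)
    · rw [transitionOf_comm]
      exact or_iff_not_imp_left.2 (hT w u huw.symm)

theorem SimpleGraph.Connected.tConnected (hG : G.Connected) (hf : ∀ x, G.Adj x (f x))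
    (hT : ∀ x y, G.Adj x y → y ≠ f x → transitionOf (f x) x y ∈ T) : G.TConnected T :=
  fun u v =>
    have ⟨q, hq⟩ := exists_walk_tCompatible_cons hf hT (hG u v).some
    ⟨q, hq.of_cons⟩

end Detour

theorem SimpleGraph.Connected.exists_connectingTransitionSet_card_le [Fintype V] [Nontrivial V]
    {G : SimpleGraph V} [DecidableRel G.Adj] (hG : G.Connected) :
    ∃ T, G.ConnectingTransitionSet T ∧ T.card ≤ ∑ b, (G.degree b - 1) := by
  classical
  choose f hf using hG.preconnected.exists_adj_of_nontrivial
  let T := Finset.univ.biUnion fun b =>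
    ((G.neighborFinset b).erase (f b)).image (transitionOf (f b) b)
  refine ⟨T, ⟨?_, hG.tConnected hf ?_⟩, ?_⟩
  · simp only [T, Finset.mem_biUnion, Finset.mem_image, Finset.mem_erase, mem_neighborFinset]
    rintro _ ⟨b, -, y, ⟨hy, hby⟩, rfl⟩
    exact ⟨f b, b, y, (hf b).symm, hby, Ne.symm hy, rfl⟩
  · intro x y hxy hy
    simp only [T, Finset.coe_biUnion, Set.mem_iUnion, Finset.mem_coe, Finset.mem_image]
    exact ⟨x, Finset.mem_univ x, y, by simp [hy, hxy], rfl⟩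
  · calc T.card ≤ ∑ b, (((G.neighborFinset b).erase (f b)).image (transitionOf (f b) b)).card :=
          Finset.card_biUnion_le
      _ ≤ ∑ b, (G.degree b - 1) := Finset.sum_le_sum fun b _ => Finset.card_image_le.trans_eq
          (by rw [Finset.card_erase_of_mem (by simpa using hf b), card_neighborFinset_eq_degree])

theorem stmt1_general {V : Type*} [Fintype V] (G : SimpleGraph V)
    (htree : G.IsTree) (h2 : 2 ≤ Fintype.card V) :
    (∀ T : Finset (Sym2 (Sym2 V)), G.ConnectingTransitionSet T →
      Fintype.card V - 2 ≤ T.card) ∧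
    IsLeast {n : ℕ | ∃ T : Finset (Sym2 (Sym2 V)),
      G.ConnectingTransitionSet T ∧ T.card = n} (Fintype.card V - 2) := by
  classical
  have : Nontrivial V := Fintype.one_lt_card_iff_nontrivial.mp h2
  have lower (T : Finset (Sym2 (Sym2 V))) (hT : G.ConnectingTransitionSet T) :
      Fintype.card V - 2 ≤ T.card :=
    htree.card_sub_two_le_card_of_tConnected h2 hT.2
  obtain ⟨T, hT, hcard⟩ := htree.connected.exists_connectingTransitionSet_card_le
  rw [htree.sum_degree_sub_one h2] at hcard
  exact ⟨lower, ⟨T, hT, le_antisymm hcard (lower T hT)⟩, fun n ⟨T', hT', hn⟩ => hn ▸ lower T' hT'⟩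

/-- Every connecting transition set of a tree with at least 2 vertices has size at least
`|V(G)| − 2`; consequently the minimum size of a connecting transition set of a tree on
`n ≥ 2` vertices is exactly `n − 2`. -/
theorem stmt1 {V : Type*} [Fintype V] [DecidableEq V] (G : SimpleGraph V)
    (htree : G.IsTree) (h2 : 2 ≤ Fintype.card V) :
    (∀ T : Finset (Sym2 (Sym2 V)), G.ConnectingTransitionSet T →
      Fintype.card V - 2 ≤ T.card) ∧
    IsLeast {n : ℕ | ∃ T : Finset (Sym2 (Sym2 V)),
      G.ConnectingTransitionSet T ∧ T.card = n} (Fintype.card V - 2) :=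
  stmt1_general G htree h2
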